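/- arXiv:1907.04644 — 2 statements merged into one kernel-verified Lean document; each statement's English description precedes it below -/
import Mathlib

section
/- Let u ∈ ℝ^n with u > 0 entrywise and ‖u‖ = 1, set λ = λ(u) = min_i (𝒜(u)u)_i / u_i, and let (Δ, δ) solve the Newton system at (u,λ). Then δ · (u^T J(u,λ)^{-1} u) = u^T J(u,λ)^{-1} r(u,λ), and consequently δ ≥ 0. -/
open Matrix Finset

noncomputable def enorm' {n : ℕ} (u : Fin n → ℝ) : ℝ := Real.sqrt (∑ i, u i ^ 2)

def IsZMatrix {n : ℕ} (B : Matrix (Fin n) (Fin n) ℝ) : Prop :=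
  ∀ i j, i ≠ j → B i j ≤ 0

def IsIrreducibleMat {n : ℕ} (B : Matrix (Fin n) (Fin n) ℝ) : Prop :=
  ¬ ∃ S : Finset (Fin n), S.Nonempty ∧ S ≠ Finset.univ ∧
    ∀ i ∈ S, ∀ j ∉ S, B i j = 0

def IsNonsingularM {n : ℕ} (B : Matrix (Fin n) (Fin n) ℝ) : Prop :=
  IsZMatrix B ∧ IsUnit B ∧ ∀ i j, 0 ≤ B⁻¹ i j

noncomputable def calA {n : ℕ} (A : Matrix (Fin n) (Fin n) ℝ) (Γ : ℝ) (a : Fin n → ℝ)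
    (u : Fin n → ℝ) : Matrix (Fin n) (Fin n) ℝ :=
  A + Γ • Matrix.diagonal (fun i => 1 - 1 / (a i + u i ^ 2))

noncomputable def rvec {n : ℕ} (A : Matrix (Fin n) (Fin n) ℝ) (Γ : ℝ) (a : Fin n → ℝ)
    (u : Fin n → ℝ) (lam : ℝ) : Fin n → ℝ :=
  calA A Γ a u *ᵥ u - lam • u

noncomputable def Jmat {n : ℕ} (A : Matrix (Fin n) (Fin n) ℝ) (Γ : ℝ) (a : Fin n → ℝ)
    (u : Fin n → ℝ) (lam : ℝ) : Matrix (Fin n) (Fin n) ℝ :=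
  A + (Γ - lam) • (1 : Matrix (Fin n) (Fin n) ℝ)
    - Γ • Matrix.diagonal (fun i => (a i - u i ^ 2) / (a i + u i ^ 2) ^ 2)

noncomputable def lamOf {n : ℕ} [NeZero n] (A : Matrix (Fin n) (Fin n) ℝ) (Γ : ℝ)
    (a : Fin n → ℝ) (u : Fin n → ℝ) : ℝ :=
  ⨅ i, (calA A Γ a u *ᵥ u) i / u i

def NewtonSystem {n : ℕ} (A : Matrix (Fin n) (Fin n) ℝ) (Γ : ℝ) (a : Fin n → ℝ)
    (u : Fin n → ℝ) (lam : ℝ) (Δ : Fin n → ℝ) (δ : ℝ) : Prop :=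
  Jmat A Γ a u lam *ᵥ Δ - δ • u = -rvec A Γ a u lam ∧
  -(u ⬝ᵥ Δ) = -(1/2 * (u ⬝ᵥ u - 1))

/-!
Eliminating `Δ` from the bordered Newton system via `u ⬝ᵥ Δ = 0` gives
`δ (uᵀ J⁻¹ u) = uᵀ J⁻¹ r`. At `λ = λ(u)` the residual `r` is nonnegative, and
`J u = r + Γ diag(2uᵢ²/(aᵢ + uᵢ²)²) u` is entrywise positive. Since `J` is a Z-matrix, the
maximum principle then makes `J` invertible with `J⁻¹ ≥ 0`, so `uᵀ J⁻¹ u > 0` and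
`uᵀ J⁻¹ r ≥ 0`, whence `δ ≥ 0`.
-/

theorem dotProduct_pos_of_pos_of_pos {ι R : Type*} [Fintype ι] [Semiring R] [PartialOrder R]
    [IsStrictOrderedRing R] {u v : ι → R} (hu : ∀ i, 0 < u i) (hv : 0 < v) :
    0 < u ⬝ᵥ v := by
  obtain ⟨hv, k, hk⟩ := Pi.lt_def.mp hv
  exact Finset.sum_pos' (fun i _ => mul_nonneg (hu i).le (hv i)) ⟨k, mem_univ k, mul_pos (hu k) hk⟩

theorem dotProduct_inv_mulVec_of_bordered {ι R : Type*} [Fintype ι] [DecidableEq ι] [CommRing R]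
    {J : Matrix ι ι R} {u r Δ : ι → R} {δ : R} (hJ : IsUnit J.det)
    (hΔ : J *ᵥ Δ - δ • u = -r) (huΔ : u ⬝ᵥ Δ = 0) :
    δ * (u ⬝ᵥ (J⁻¹ *ᵥ u)) = u ⬝ᵥ (J⁻¹ *ᵥ r) := by
  have hΔ' : Δ = J⁻¹ *ᵥ (-r + δ • u) := by
    rw [← sub_eq_iff_eq_add.mp hΔ, mulVec_mulVec, nonsing_inv_mul J hJ, one_mulVec]
  rw [hΔ', mulVec_add, mulVec_neg, mulVec_smul, dotProduct_add, dotProduct_neg,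
    dotProduct_smul, smul_eq_mul] at huΔ
  linear_combination huΔ

namespace IsZMatrix

variable {n : ℕ} {J : Matrix (Fin n) (Fin n) ℝ}

theorem mulVec_apply_nonpos_of_apply_eq_zero (hJ : IsZMatrix J) {y : Fin n → ℝ} (hy : 0 ≤ y)
    {k : Fin n} (hyk : y k = 0) : (J *ᵥ y) k ≤ 0 := by
  refine (Finset.sum_nonpos fun j _ => ?_ : ∑ j, J k j * y j ≤ 0)
  rcases eq_or_ne k j with rfl | hkj
  · simp [hyk]
  · exact mul_nonpos_of_nonpos_of_nonneg (hJ k j hkj) (hy j)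

theorem nonneg_of_mulVec_nonneg (hJ : IsZMatrix J) {u x : Fin n → ℝ} (hu : ∀ i, 0 < u i)
    (hJu : ∀ i, 0 < (J *ᵥ u) i) (hJx : 0 ≤ J *ᵥ x) : 0 ≤ x := by
  intro i
  obtain ⟨k, -, hk⟩ := Finset.exists_min_image univ (fun j => x j / u j) ⟨i, mem_univ i⟩
  set t := x k / u k
  have ht : 0 ≤ t := by
    by_contra! ht
    -- `x - t u` is nonnegative and vanishes at `k`, where `J` applied to it is positive.
    have hy : 0 ≤ x - t • u := fun j => by
      have := (le_div_iff₀ (hu j)).mp (hk j (mem_univ j))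
      simp only [Pi.zero_apply, Pi.sub_apply, Pi.smul_apply, smul_eq_mul]
      linarith
    have hyk : (x - t • u) k = 0 := by
      simp [t, div_mul_cancel₀ (x k) (hu k).ne']
    have hle := hJ.mulVec_apply_nonpos_of_apply_eq_zero hy hyk
    rw [mulVec_sub, mulVec_smul, Pi.sub_apply, Pi.smul_apply, smul_eq_mul] at hle
    linarith [show 0 ≤ (J *ᵥ x) k from hJx k, mul_pos (neg_pos.mpr ht) (hJu k)]
  exact (mul_nonneg ht (hu i).le).trans ((le_div_iff₀ (hu i)).mp (hk i (mem_univ i)))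

theorem isUnit_det (hJ : IsZMatrix J) {u : Fin n → ℝ} (hu : ∀ i, 0 < u i)
    (hJu : ∀ i, 0 < (J *ᵥ u) i) : IsUnit J.det := by
  rw [isUnit_iff_ne_zero]
  intro hdet
  obtain ⟨v, hv, hJv⟩ := exists_mulVec_eq_zero_iff.mpr hdet
  have hv_nonneg : 0 ≤ v := hJ.nonneg_of_mulVec_nonneg hu hJu hJv.ge
  have hv_nonpos : 0 ≤ -v := hJ.nonneg_of_mulVec_nonneg hu hJu (by rw [mulVec_neg, hJv, neg_zero])
  exact hv (le_antisymm (neg_nonneg.mp hv_nonpos) hv_nonneg)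

theorem inv_mulVec_nonneg (hJ : IsZMatrix J) {u x : Fin n → ℝ} (hu : ∀ i, 0 < u i)
    (hJu : ∀ i, 0 < (J *ᵥ u) i) (hx : 0 ≤ x) : 0 ≤ J⁻¹ *ᵥ x := by
  refine hJ.nonneg_of_mulVec_nonneg hu hJu ?_
  rwa [mulVec_mulVec, mul_nonsing_inv J (hJ.isUnit_det hu hJu), one_mulVec]

theorem dotProduct_inv_mulVec_self_pos [NeZero n] (hJ : IsZMatrix J) {u : Fin n → ℝ}
    (hu : ∀ i, 0 < u i) (hJu : ∀ i, 0 < (J *ᵥ u) i) : 0 < u ⬝ᵥ (J⁻¹ *ᵥ u) := by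
  refine dotProduct_pos_of_pos_of_pos hu
    (lt_of_le_of_ne (hJ.inv_mulVec_nonneg hu hJu fun i => (hu i).le) fun h => ?_)
  have hJJu : J *ᵥ (J⁻¹ *ᵥ u) = u := by
    rw [mulVec_mulVec, mul_nonsing_inv J (hJ.isUnit_det hu hJu), one_mulVec]
  rw [← h, mulVec_zero] at hJJu
  exact (hu 0).ne (congrFun hJJu 0)

end IsZMatrix

theorem dotProduct_self_eq_one_of_enorm'_eq_one {n : ℕ} {u : Fin n → ℝ} (hu : enorm' u = 1) :
    u ⬝ᵥ u = 1 := by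
  simpa [enorm', dotProduct, sq] using hu

section Newton

variable {n : ℕ} {A : Matrix (Fin n) (Fin n) ℝ} {Γ : ℝ} {a u : Fin n → ℝ}

theorem rvec_lamOf_nonneg [NeZero n] (hu : ∀ i, 0 < u i) :
    0 ≤ rvec A Γ a u (lamOf A Γ a u) := fun i => by
  have hle : lamOf A Γ a u ≤ (calA A Γ a u *ᵥ u) i / u i :=
    ciInf_le (Set.finite_range _).bddBelow i
  have := (le_div_iff₀ (hu i)).mp hle
  simp only [rvec, Pi.zero_apply, Pi.sub_apply, Pi.smul_apply, smul_eq_mul]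
  linarith

theorem Jmat_isZMatrix (hA : IsZMatrix A) (lam : ℝ) : IsZMatrix (Jmat A Γ a u lam) :=
  fun i j hij => by simpa [Jmat, one_apply_ne hij, diagonal_apply_ne _ hij] using hA i j hij

theorem Jmat_mulVec_self (ha : ∀ i, a i + u i ^ 2 ≠ 0) (lam : ℝ) :
    Jmat A Γ a u lam *ᵥ u = rvec A Γ a u lam + Γ • fun i => 2 * u i ^ 3 / (a i + u i ^ 2) ^ 2 := by
  ext i
  simp only [Jmat, sub_mulVec, add_mulVec, smul_mulVec, one_mulVec, Pi.sub_apply, Pi.add_apply,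
    Pi.smul_apply, smul_eq_mul, mulVec_diagonal, rvec, calA, one_div]
  field_simp [ha i]
  ring

end Newton

theorem stmt_7_general {n : ℕ} [NeZero n] (A : Matrix (Fin n) (Fin n) ℝ) (a : Fin n → ℝ) (Γ : ℝ)
    (ha : ∀ i, 0 < a i) (hΓ : 0 < Γ)
    (hA : IsNonsingularM A)
    (u : Fin n → ℝ) (hu : ∀ i, 0 < u i) (hnorm : enorm' u = 1)
    (Δ : Fin n → ℝ) (δ : ℝ)
    (hN : NewtonSystem A Γ a u (lamOf A Γ a u) Δ δ) :
    δ * (u ⬝ᵥ ((Jmat A Γ a u (lamOf A Γ a u))⁻¹ *ᵥ u)) =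
      u ⬝ᵥ ((Jmat A Γ a u (lamOf A Γ a u))⁻¹ *ᵥ rvec A Γ a u (lamOf A Γ a u)) ∧
    0 ≤ δ := by
  set lam := lamOf A Γ a u
  set J := Jmat A Γ a u lam
  have hr : 0 ≤ rvec A Γ a u lam := rvec_lamOf_nonneg hu
  have hZ : IsZMatrix J := Jmat_isZMatrix hA.1 lam
  have hden : ∀ i, 0 < a i + u i ^ 2 := fun i => add_pos_of_pos_of_nonneg (ha i) (sq_nonneg _)
  have hJu : ∀ i, 0 < (J *ᵥ u) i := fun i => by
    have hdiag : 0 < 2 * u i ^ 3 / (a i + u i ^ 2) ^ 2 :=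
      div_pos (mul_pos two_pos (pow_pos (hu i) 3)) (pow_pos (hden i) 2)
    rw [Jmat_mulVec_self (fun i => (hden i).ne') lam]
    exact add_pos_of_nonneg_of_pos (hr i) (mul_pos hΓ hdiag)
  have huΔ : u ⬝ᵥ Δ = 0 := by
    linarith [hN.2, dotProduct_self_eq_one_of_enorm'_eq_one hnorm]
  have hδ := dotProduct_inv_mulVec_of_bordered (hZ.isUnit_det hu hJu) hN.1 huΔ
  refine ⟨hδ, nonneg_of_mul_nonneg_left ?_ (hZ.dotProduct_inv_mulVec_self_pos hu hJu)⟩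
  exact hδ ▸ dotProduct_nonneg_of_nonneg (fun i => (hu i).le) (hZ.inv_mulVec_nonneg hu hJu hr)

theorem stmt_7 {n : ℕ} [NeZero n] (A : Matrix (Fin n) (Fin n) ℝ) (a : Fin n → ℝ) (Γ : ℝ)
    (ha : ∀ i, 0 < a i) (hΓ : 0 < Γ)
    (hA : IsNonsingularM A) (hAirr : IsIrreducibleMat A)
    (u : Fin n → ℝ) (hu : ∀ i, 0 < u i) (hnorm : enorm' u = 1)
    (Δ : Fin n → ℝ) (δ : ℝ)
    (hN : NewtonSystem A Γ a u (lamOf A Γ a u) Δ δ) :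
    δ * (u ⬝ᵥ ((Jmat A Γ a u (lamOf A Γ a u))⁻¹ *ᵥ u)) =
      u ⬝ᵥ ((Jmat A Γ a u (lamOf A Γ a u))⁻¹ *ᵥ rvec A Γ a u (lamOf A Γ a u)) ∧
    0 ≤ δ :=
  stmt_7_general A a Γ ha hΓ hA u hu hnorm Δ δ hN
end

section
/- There exist λ ∈ ℝ and u ∈ ℝ^n such that u > 0 entrywise, ‖u‖ = 1, and 𝒜(u)u = λu; that is, the nonlinear algebraic eigenvalue problem A u + Γ·diag(1 − 1/(a_i + u_i²))·u = λu, u^T u = 1, has a positive solution. -/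
open Matrix Finset

noncomputable def eucNorm {n : ℕ} (u : Fin n → ℝ) : ℝ := Real.sqrt (∑ i, u i ^ 2)

/-!
Let `lamOf u = minᵢ (𝒜(u) u)ᵢ / uᵢ`, the Collatz–Wielandt quotient, and maximise it over positive
unit vectors. Since `A` is a Z-matrix, each row gives `-A p q * u q ≤ (A p p + Γ - r) * u p` once
`lamOf u ≥ r`; by irreducibility these bounds chain from the largest coordinate to all others, so
the vectors doing at least as well as a fixed one lie in a compact set of vectors `≥ δ > 0`, and the
maximum is attained. At a maximiser that is not an eigenvector, moving against the nonnegative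
residual keeps `lamOf` and strictly shrinks the norm; renormalising then scales by `t > 1`, which
strictly increases every quotient because `1 - 1 / (a i + t ^ 2 * u i ^ 2)` increases with `t`.
-/

open Filter Topology

section EucNorm

variable {n : ℕ} {u v : Fin n → ℝ}

lemma eucNorm_eq_one_iff : eucNorm u = 1 ↔ ∑ i, u i ^ 2 = 1 := by
  rw [eucNorm, Real.sqrt_eq_one]

lemma continuous_eucNorm : Continuous (eucNorm (n := n)) := by
  unfold eucNorm
  fun_prop

lemma eucNorm_smul {t : ℝ} (ht : 0 ≤ t) (u : Fin n → ℝ) : eucNorm (t • u) = t * eucNorm u := by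
  simp only [eucNorm, Pi.smul_apply, smul_eq_mul, mul_pow, ← Finset.mul_sum]
  rw [Real.sqrt_mul (sq_nonneg t), Real.sqrt_sq ht]

lemma eucNorm_pos [NeZero n] (hu : ∀ i, 0 < u i) : 0 < eucNorm u :=
  Real.sqrt_pos.mpr (Finset.sum_pos (fun i _ => pow_pos (hu i) 2) univ_nonempty)

lemma eucNorm_inv_smul_self [NeZero n] (hu : ∀ i, 0 < u i) : eucNorm ((eucNorm u)⁻¹ • u) = 1 := by
  rw [eucNorm_smul (inv_nonneg.mpr (eucNorm_pos hu).le), inv_mul_cancel₀ (eucNorm_pos hu).ne']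

lemma inv_eucNorm_smul_self_pos [NeZero n] (hu : ∀ i, 0 < u i) (i : Fin n) :
    0 < ((eucNorm u)⁻¹ • u) i :=
  mul_pos (inv_pos.mpr (eucNorm_pos hu)) (hu i)

lemma eucNorm_lt_eucNorm (hv : 0 ≤ v) (hvu : v < u) : eucNorm v < eucNorm u := by
  obtain ⟨hle, i, hlt⟩ := Pi.lt_def.mp hvu
  refine Real.sqrt_lt_sqrt (Finset.sum_nonneg fun j _ => sq_nonneg (v j)) ?_
  refine Finset.sum_lt_sum (fun j _ => pow_le_pow_left₀ (hv j) (hle j) 2) ⟨i, mem_univ i, ?_⟩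
  exact pow_lt_pow_left₀ hlt (hv i) two_ne_zero

lemma le_one_of_eucNorm_eq_one (hu : eucNorm u = 1) (i : Fin n) : u i ≤ 1 := by
  have : u i ^ 2 ≤ 1 := eucNorm_eq_one_iff.mp hu ▸
    Finset.single_le_sum (fun j _ => sq_nonneg (u j)) (mem_univ i)
  nlinarith

lemma exists_inv_card_le [NeZero n] (hu : 0 ≤ u) (hnorm : eucNorm u = 1) :
    ∃ i, (n : ℝ)⁻¹ ≤ u i := by
  obtain ⟨i, -, hi⟩ : ∃ i ∈ univ, (n : ℝ)⁻¹ ≤ u i ^ 2 := by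
    refine Finset.exists_le_of_sum_le univ_nonempty ?_
    rw [eucNorm_eq_one_iff.mp hnorm, sum_const, card_univ, Fintype.card_fin, nsmul_eq_mul,
      mul_inv_cancel₀ (NeZero.ne _)]
  have := le_one_of_eucNorm_eq_one hnorm i
  exact ⟨i, hi.trans (by nlinarith [mul_nonneg (hu i) (sub_nonneg.mpr this)])⟩

end EucNorm

section ZMatrix

variable {n : ℕ} {B : Matrix (Fin n) (Fin n) ℝ} {u : Fin n → ℝ}

lemma IsZMatrix.mulVec_apply_le_sum (hB : IsZMatrix B) (hu : 0 ≤ u) {p : Fin n}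
    {S : Finset (Fin n)} (hp : p ∈ S) : (B *ᵥ u) p ≤ ∑ j ∈ S, B p j * u j :=
  Finset.sum_le_sum_of_subset_of_nonpos' (subset_univ S) fun j _ hj =>
    mul_nonpos_of_nonpos_of_nonneg (hB p j (ne_of_mem_of_not_mem hp hj)) (hu j)

lemma IsIrreducibleMat.exists_ne_zero (hB : IsIrreducibleMat B) {T : Finset (Fin n)}
    (hT : T.Nonempty) (hTu : T ≠ univ) : ∃ p ∉ T, ∃ q ∈ T, B p q ≠ 0 := by
  by_contra! h
  refine hB ⟨Tᶜ, ?_, (compl_ne_univ_iff_nonempty T).mpr hT, fun p hp q hq => ?_⟩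
  · rwa [Finset.nonempty_iff_ne_empty, Ne, compl_eq_empty_iff]
  · exact h p (mem_compl.mp hp) q (by simpa using hq)

variable {ρ c : ℝ}

lemma IsIrreducibleMat.min_le_card_filter (hB : IsIrreducibleMat B) (hρ₀ : 0 ≤ ρ) (hρ₁ : ρ ≤ 1)
    (hc : 0 ≤ c) (hu : ∀ p q, p ≠ q → B p q ≠ 0 → ρ * u q ≤ u p) {i₀ : Fin n} (hi₀ : c ≤ u i₀)
    (k : ℕ) : min (k + 1) n ≤ #{i | c * ρ ^ k ≤ u i} := by
  induction k with
  | zero =>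
    have : i₀ ∈ ({i | c * ρ ^ 0 ≤ u i} : Finset (Fin n)) := by simpa using hi₀
    exact (min_le_left _ _).trans (card_pos.mpr ⟨i₀, this⟩)
  | succ k ih =>
    set T : Finset (Fin n) := {i | c * ρ ^ k ≤ u i}
    set T' : Finset (Fin n) := {i | c * ρ ^ (k + 1) ≤ u i}
    have hTT' : T ⊆ T' := fun i hi => by
      simp only [T, T', mem_filter, mem_univ, true_and] at hi ⊢
      exact le_trans (mul_le_mul_of_nonneg_left (pow_le_pow_of_le_one hρ₀ hρ₁ k.le_succ) hc) hi
    by_cases hTu : T = univ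
    · rw [univ_subset_iff.mp (hTu ▸ hTT' :), card_univ, Fintype.card_fin]
      exact min_le_right _ _
    have hT : T.Nonempty := card_pos.mp (by have := i₀.pos; omega)
    obtain ⟨p, hpT, q, hqT, hApq⟩ := hB.exists_ne_zero hT hTu
    have hpq : p ≠ q := fun h => hpT (h ▸ hqT)
    have hpT' : p ∈ T' := by
      simp only [T, T', mem_filter, mem_univ, true_and] at hqT ⊢
      calc c * ρ ^ (k + 1) = ρ * (c * ρ ^ k) := by ring
        _ ≤ ρ * u q := mul_le_mul_of_nonneg_left hqT hρ₀
        _ ≤ u p := hu p q hpq hApq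
    have hcard : #T + 1 ≤ #T' :=
      card_insert_of_notMem hpT ▸ card_le_card (insert_subset hpT' hTT')
    have : #T < n := by simpa using card_lt_card (ssubset_univ_iff.mpr hTu)
    omega

lemma IsIrreducibleMat.mul_pow_le (hB : IsIrreducibleMat B) (hρ₀ : 0 ≤ ρ) (hρ₁ : ρ ≤ 1)
    (hc : 0 ≤ c) (hu : ∀ p q, p ≠ q → B p q ≠ 0 → ρ * u q ≤ u p) {i₀ : Fin n} (hi₀ : c ≤ u i₀)
    (i : Fin n) : c * ρ ^ (n - 1) ≤ u i := by
  have h := hB.min_le_card_filter hρ₀ hρ₁ hc hu hi₀ (n - 1)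
  rw [Nat.sub_add_cancel i₀.pos, min_self] at h
  have huniv : ({j | c * ρ ^ (n - 1) ≤ u j} : Finset (Fin n)) = univ :=
    eq_univ_of_card _ (le_antisymm (card_le_univ _) (by simpa using h))
  simpa using eq_univ_iff_forall.mp huniv i

end ZMatrix

section Eigenproblem

variable {n : ℕ} {A : Matrix (Fin n) (Fin n) ℝ} {Γ : ℝ} {a : Fin n → ℝ} {u : Fin n → ℝ} {r : ℝ}

lemma calA_mulVec_apply (A : Matrix (Fin n) (Fin n) ℝ) (Γ : ℝ) (a u : Fin n → ℝ) (i : Fin n) :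
    (calA A Γ a u *ᵥ u) i = (A *ᵥ u) i + Γ * (1 - 1 / (a i + u i ^ 2)) * u i := by
  simp [calA, add_mulVec, smul_mulVec, mulVec_diagonal, mul_assoc]

lemma continuous_calA_mulVec_apply (ha : ∀ i, 0 < a i) (i : Fin n) :
    Continuous fun u => (calA A Γ a u *ᵥ u) i := by
  simp only [calA_mulVec_apply]
  have : ∀ u : Fin n → ℝ, a i + u i ^ 2 ≠ 0 := fun u =>
    (add_pos_of_pos_of_nonneg (ha i) (sq_nonneg _)).ne'
  fun_prop (disch := exact this)

lemma calA_smul_mulVec_div (t : ℝ) (ht : t ≠ 0) {i : Fin n} (hi : u i ≠ 0) :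
    (calA A Γ a (t • u) *ᵥ (t • u)) i / (t • u) i
      = (A *ᵥ u) i / u i + Γ * (1 - 1 / (a i + t ^ 2 * u i ^ 2)) := by
  rw [calA_mulVec_apply, mulVec_smul]
  simp only [Pi.smul_apply, smul_eq_mul, mul_pow]
  field_simp

lemma eventually_pos_and_lt_calA_mulVec (ha : ∀ i, 0 < a i) (hu : ∀ i, 0 < u i) (r : ℝ) :
    ∀ᶠ v in 𝓝 u, ∀ i, 0 < v i ∧
      (r * u i < (calA A Γ a u *ᵥ u) i → r * v i < (calA A Γ a v *ᵥ v) i) :=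
  eventually_all.mpr fun i =>
    (continuousAt_const.eventually_lt (continuous_apply i).continuousAt (hu i)).and
      (eventually_imp_distrib_left.mpr fun h =>
        (continuous_const.mul (continuous_apply i)).continuousAt.eventually_lt
          (continuous_calA_mulVec_apply ha i).continuousAt h)

variable [NeZero n]

lemma lamOf_le (u : Fin n → ℝ) (i : Fin n) : lamOf A Γ a u ≤ (calA A Γ a u *ᵥ u) i / u i :=
  ciInf_le (Set.finite_range _).bddBelow i

lemma le_lamOf_iff (hu : ∀ i, 0 < u i) :
    r ≤ lamOf A Γ a u ↔ ∀ i, r * u i ≤ (calA A Γ a u *ᵥ u) i := by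
  simp only [lamOf, le_ciInf_iff (Set.finite_range _).bddBelow, le_div_iff₀ (hu _)]

lemma continuousOn_lamOf (ha : ∀ i, 0 < a i) :
    ContinuousOn (lamOf A Γ a) {u | ∀ i, 0 < u i} := by
  have : lamOf A Γ a = fun u => univ.inf' univ_nonempty fun i => (calA A Γ a u *ᵥ u) i / u i :=
    funext fun u => (inf'_univ_eq_ciInf _).symm
  rw [this]
  exact ContinuousOn.finset_inf'_apply _ fun i _ =>
    (continuous_calA_mulVec_apply ha i).continuousOn.div (continuous_apply i).continuousOn
      fun u hu => (hu i).ne'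

lemma lamOf_lt_lamOf_smul (ha : ∀ i, 0 < a i) (hΓ : 0 < Γ) (hu : ∀ i, 0 < u i) {t : ℝ}
    (ht : 1 < t) : lamOf A Γ a u < lamOf A Γ a (t • u) := by
  obtain ⟨i, hi⟩ := exists_eq_ciInf_of_finite
    (f := fun i => (calA A Γ a (t • u) *ᵥ (t • u)) i / (t • u) i)
  rw [show lamOf A Γ a (t • u) = _ from hi.symm]
  have h₁ := calA_smul_mulVec_div (A := A) (Γ := Γ) (a := a) 1 one_ne_zero (hu i).ne'
  rw [one_smul, one_pow, one_mul] at h₁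
  refine (lamOf_le u i).trans_lt ?_
  rw [h₁, calA_smul_mulVec_div t (by positivity) (hu i).ne']
  have := ha i
  gcongr
  exact lt_mul_left (pow_pos (hu i) 2) (one_lt_pow₀ ht two_ne_zero)

lemma neg_mul_le_of_le_lamOf (hZ : IsZMatrix A) (ha : ∀ i, 0 < a i) (hΓ : 0 < Γ)
    (hu : ∀ i, 0 < u i) (hr : r ≤ lamOf A Γ a u) {p q : Fin n} (hpq : p ≠ q) :
    -A p q * u q ≤ (A p p + Γ - r) * u p := by
  have h₁ := (le_lamOf_iff hu).mp hr p
  have h₂ := hZ.mulVec_apply_le_sum (fun j => (hu j).le) (mem_insert_self p {q})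
  rw [sum_pair hpq] at h₂
  have h₃ : Γ * (1 - 1 / (a p + u p ^ 2)) * u p ≤ Γ * u p := by
    have := ha p
    gcongr
    exacts [(hu p).le, mul_le_of_le_one_right hΓ.le (sub_le_self _ (by positivity))]
  rw [calA_mulVec_apply] at h₁
  linarith

lemma exists_pos_le_of_le_lamOf (hZ : IsZMatrix A) (hirr : IsIrreducibleMat A)
    (ha : ∀ i, 0 < a i) (hΓ : 0 < Γ) (r : ℝ) :
    ∃ δ > 0, ∀ u : Fin n → ℝ, (∀ i, 0 < u i) → eucNorm u = 1 → r ≤ lamOf A Γ a u →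
      ∀ i, δ ≤ u i := by
  obtain ⟨ρ, hρ, hρ₀⟩ : ∃ ρ : ℝ, (ρ < 1 ∧ ∀ p q, 0 < -A p q → ρ * (A p p + Γ - r) < -A p q)
      ∧ 0 < ρ := by
    refine ((Eventually.filter_mono (nhdsWithin_le_nhds (a := (0 : ℝ)) (s := Set.Ioi 0)) ?_).and
      self_mem_nhdsWithin).exists
    refine (eventually_lt_nhds zero_lt_one).and (eventually_all.mpr fun p => eventually_all.mpr
      fun q => eventually_imp_distrib_left.mpr fun h => ?_)
    exact (continuous_id.mul continuous_const).continuousAt.eventually_lt continuousAt_const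
      (by simpa using h)
  refine ⟨(n : ℝ)⁻¹ * ρ ^ (n - 1),
    mul_pos (inv_pos.mpr (Nat.cast_pos.mpr (NeZero.pos n))) (pow_pos hρ₀ _), fun u hu hnorm hr => ?_⟩
  obtain ⟨i₀, hi₀⟩ := exists_inv_card_le (fun i => (hu i).le) hnorm
  refine hirr.mul_pow_le hρ₀.le hρ.1.le (by positivity) (fun p q hpq hApq => ?_) hi₀
  have hApq' : 0 < -A p q := neg_pos.mpr ((hZ p q hpq).lt_of_ne hApq)
  have h := neg_mul_le_of_le_lamOf hZ ha hΓ hu hr hpq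
  have hM : 0 < A p p + Γ - r := pos_of_mul_pos_left ((mul_pos hApq' (hu q)).trans_le h) (hu p).le
  refine le_of_mul_le_mul_left ?_ hM
  calc (A p p + Γ - r) * (ρ * u q) = ρ * (A p p + Γ - r) * u q := by ring
    _ ≤ -A p q * u q := mul_le_mul_of_nonneg_right (hρ.2 p q hApq').le (hu q).le
    _ ≤ (A p p + Γ - r) * u p := h

/-- Moving `u` against its residual `w ≥ 0` does not lower `lamOf`: where `w i > 0` the strict
inequality survives small steps, and where `w i = 0` only the nonpositive off-diagonal entries of
`A` see the change. -/
lemma exists_eucNorm_lt_lamOf_le (hZ : IsZMatrix A) (ha : ∀ i, 0 < a i) (hu : ∀ i, 0 < u i)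
    (hne : calA A Γ a u *ᵥ u ≠ lamOf A Γ a u • u) :
    ∃ v, (∀ i, 0 < v i) ∧ eucNorm v < eucNorm u ∧ lamOf A Γ a u ≤ lamOf A Γ a v := by
  set r := lamOf A Γ a u
  set w := calA A Γ a u *ᵥ u - r • u
  have hw : 0 ≤ w := fun i => sub_nonneg.mpr ((le_lamOf_iff hu).mp le_rfl i)
  have hpath : Tendsto (fun ε : ℝ => u - ε • w) (𝓝[>] 0) (𝓝 u) := by
    have : Continuous fun ε : ℝ => u - ε • w := by fun_prop
    simpa using (this.tendsto 0).mono_left nhdsWithin_le_nhds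
  obtain ⟨ε, hv, hε⟩ :=
    ((hpath.eventually (eventually_pos_and_lt_calA_mulVec ha hu r)).and self_mem_nhdsWithin).exists
  set v := u - ε • w with hv_def
  have hvu : v < u := sub_lt_self u (smul_pos hε (lt_of_le_of_ne hw (sub_ne_zero.mpr hne).symm))
  refine ⟨v, fun i => (hv i).1, eucNorm_lt_eucNorm (fun i => (hv i).1.le) hvu,
    (le_lamOf_iff fun i => (hv i).1).mpr fun i => ?_⟩
  rcases (hw i).lt_or_eq with hwi | hwi
  · exact ((hv i).2 (by simpa [w, sub_pos] using hwi)).le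
  · have hvi : v i = u i := by simp [v, ← hwi]
    have hAw : (A *ᵥ w) i ≤ 0 := by
      simpa [← hwi] using hZ.mulVec_apply_le_sum hw (mem_singleton_self i)
    have hcalA : (calA A Γ a v *ᵥ v) i = (calA A Γ a u *ᵥ u) i - ε * (A *ᵥ w) i := by
      rw [calA_mulVec_apply, calA_mulVec_apply, hvi, hv_def, mulVec_sub, mulVec_smul]
      simp only [Pi.sub_apply, Pi.smul_apply, smul_eq_mul]
      ring
    have hru : (calA A Γ a u *ᵥ u) i = r * u i := by
      simpa [w, sub_eq_zero] using hwi.symm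
    rw [hcalA, hru, hvi]
    nlinarith [mul_nonpos_of_nonneg_of_nonpos (le_of_lt hε) hAw]

lemma exists_lamOf_lt (hZ : IsZMatrix A) (ha : ∀ i, 0 < a i) (hΓ : 0 < Γ) (hu : ∀ i, 0 < u i)
    (hnorm : eucNorm u = 1) (hne : calA A Γ a u *ᵥ u ≠ lamOf A Γ a u • u) :
    ∃ v, (∀ i, 0 < v i) ∧ eucNorm v = 1 ∧ lamOf A Γ a u < lamOf A Γ a v := by
  obtain ⟨v, hv, hvu, hle⟩ := exists_eucNorm_lt_lamOf_le hZ ha hu hne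
  refine ⟨(eucNorm v)⁻¹ • v, inv_eucNorm_smul_self_pos hv, eucNorm_inv_smul_self hv,
    hle.trans_lt (lamOf_lt_lamOf_smul ha hΓ hv ?_)⟩
  exact (one_lt_inv₀ (eucNorm_pos hv)).mpr (hnorm ▸ hvu)

end Eigenproblem

lemma isCompact_eucNorm_eq_one_inter_Icc {n : ℕ} (δ : ℝ) :
    IsCompact ({u : Fin n → ℝ | eucNorm u = 1} ∩ Set.Icc (fun _ => δ) 1) :=
  isCompact_Icc.inter_left (isClosed_eq continuous_eucNorm continuous_const)

theorem stmt_17 {n : ℕ} [NeZero n] (A : Matrix (Fin n) (Fin n) ℝ) (a : Fin n → ℝ) (Γ : ℝ)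
    (ha : ∀ i, 0 < a i) (hΓ : 0 < Γ)
    (hA : IsNonsingularM A) (hAirr : IsIrreducibleMat A) :
    ∃ (lam : ℝ) (u : Fin n → ℝ),
      (∀ i, 0 < u i) ∧ eucNorm u = 1 ∧ calA A Γ a u *ᵥ u = lam • u := by
  have hone : ∀ i : Fin n, (0 : ℝ) < (1 : Fin n → ℝ) i := fun _ => one_pos
  set u₀ : Fin n → ℝ := (eucNorm (1 : Fin n → ℝ))⁻¹ • 1
  obtain ⟨δ, hδ, hδle⟩ := exists_pos_le_of_le_lamOf hA.1 hAirr ha hΓ (lamOf A Γ a u₀)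
  set K := {u : Fin n → ℝ | eucNorm u = 1} ∩ Set.Icc (fun _ => δ) 1
  have mem_K : ∀ u, (∀ i, 0 < u i) → eucNorm u = 1 → lamOf A Γ a u₀ ≤ lamOf A Γ a u → u ∈ K :=
    fun u hu hnorm hr => ⟨hnorm, hδle u hu hnorm hr, le_one_of_eucNorm_eq_one hnorm⟩
  have hu₀K := mem_K u₀ (inv_eucNorm_smul_self_pos hone) (eucNorm_inv_smul_self hone) le_rfl
  obtain ⟨u, huK, hmax⟩ := (isCompact_eucNorm_eq_one_inter_Icc δ).exists_isMaxOn ⟨u₀, hu₀K⟩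
    ((continuousOn_lamOf ha).mono fun u hu i => hδ.trans_le (hu.2.1 i))
  have hu : ∀ i, 0 < u i := fun i => hδ.trans_le (huK.2.1 i)
  refine ⟨lamOf A Γ a u, u, hu, huK.1, by_contra fun hne => ?_⟩
  obtain ⟨v, hv, hvnorm, hlt⟩ := exists_lamOf_lt hA.1 ha hΓ hu huK.1 hne
  exact hlt.not_ge (hmax (mem_K v hv hvnorm ((hmax hu₀K).trans hlt.le)))
end
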